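/- Let H be a directed m-uniform hypergraph on n vertices with m even, and let H₁,…,H_p be directed spanning subhypergraphs of H (each on the same vertex set V) whose edge sets E(H₁),…,E(H_p) form a partition of E. Then λ_max^Z(A_H) ≤ Σ_{i=1}^p λ_max^Z(A_{H_i}), where A_G = A_G⁺ + A_G⁻ for a directed m-uniform hypergraph G. -/

import Mathlib

open Finset

/-- `(A x^{m-1})_i` for a real order-`m` dimension-`n` hypermatrix `A`
and a real vector `x`. -/
noncomputable def hmApply {m n : ℕ} (hm : 0 < m) (A : (Fin m → Fin n) → ℝ)
    (x : Fin n → ℝ) (i : Fin n) : ℝ :=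
  ∑ f ∈ Finset.univ.filter (fun f : Fin m → Fin n => f ⟨0, hm⟩ = i),
    A f * ∏ j ∈ Finset.univ.filter (fun j : Fin m => j ≠ ⟨0, hm⟩), x (f j)

/-- `(A x^{m-1})_i` for a real hypermatrix `A` and a complex vector `x`. -/
noncomputable def hmApplyC {m n : ℕ} (hm : 0 < m) (A : (Fin m → Fin n) → ℝ)
    (x : Fin n → ℂ) (i : Fin n) : ℂ :=
  ∑ f ∈ Finset.univ.filter (fun f : Fin m → Fin n => f ⟨0, hm⟩ = i),
    (A f : ℂ) * ∏ j ∈ Finset.univ.filter (fun j : Fin m => j ≠ ⟨0, hm⟩), x (f j)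

/-- `A x^m`, the homogeneous form associated with a hypermatrix. -/
noncomputable def formEval {m n : ℕ} (A : (Fin m → Fin n) → ℝ) (x : Fin n → ℝ) : ℝ :=
  ∑ f : Fin m → Fin n, A f * ∏ j, x (f j)

/-- `lam ∈ ℂ` is an eigenvalue of `A`:  there is a nonzero complex vector `x` with
`(A x^{m-1})_i = lam * x_i^{m-1}` for all `i`. -/
def IsEigenvalue {m n : ℕ} (hm : 0 < m) (A : (Fin m → Fin n) → ℝ) (lam : ℂ) : Prop :=
  ∃ x : Fin n → ℂ, x ≠ 0 ∧ ∀ i, hmApplyC hm A x i = lam * (x i) ^ (m - 1)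

/-- `(lam, x)` is an H-eigenpair of `A` (both real). -/
def IsHEigenpair {m n : ℕ} (hm : 0 < m) (A : (Fin m → Fin n) → ℝ)
    (lam : ℝ) (x : Fin n → ℝ) : Prop :=
  x ≠ 0 ∧ ∀ i, hmApply hm A x i = lam * (x i) ^ (m - 1)

/-- `(lam, x)` is a Z-eigenpair of `A`:  `A x^{m-1} = lam x` and `∑ x_i² = 1`. -/
def IsZEigenpair {m n : ℕ} (hm : 0 < m) (A : (Fin m → Fin n) → ℝ)
    (lam : ℝ) (x : Fin n → ℝ) : Prop :=
  (∀ i, hmApply hm A x i = lam * x i) ∧ ∑ i, (x i) ^ 2 = 1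

/-- The spectral radius of `A`: the largest modulus of an eigenvalue. -/
noncomputable def specRad {m n : ℕ} (hm : 0 < m) (A : (Fin m → Fin n) → ℝ) : ℝ :=
  sSup {r : ℝ | ∃ lam : ℂ, IsEigenvalue hm A lam ∧ r = ‖lam‖}

/-- The largest Z-eigenvalue of `A`. -/
noncomputable def zMax {m n : ℕ} (hm : 0 < m) (A : (Fin m → Fin n) → ℝ) : ℝ :=
  sSup {lam : ℝ | ∃ x : Fin n → ℝ, IsZEigenpair hm A lam x}

/-- `A` is copositive: `A x^m ≥ 0` for every entrywise nonnegative real `x`. -/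
def Copositive {m n : ℕ} (A : (Fin m → Fin n) → ℝ) : Prop :=
  ∀ x : Fin n → ℝ, (∀ i, 0 ≤ x i) → 0 ≤ formEval A x

/-- A directed hypergraph on vertex set `Fin n`: each edge is a pair
(tail, head) of disjoint nonempty vertex sets, and distinct edges have
distinct vertex sets. -/
structure DirHypergraph (n : ℕ) where
  edges : Finset (Finset (Fin n) × Finset (Fin n))
  tail_nonempty : ∀ e ∈ edges, e.1.Nonempty
  head_nonempty : ∀ e ∈ edges, e.2.Nonempty
  tail_head_disjoint : ∀ e ∈ edges, Disjoint e.1 e.2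
  union_injective : ∀ e ∈ edges, ∀ e' ∈ edges, e.1 ∪ e.2 = e'.1 ∪ e'.2 → e = e'

namespace DirHypergraph

variable {n : ℕ}

/-- `H` is `m`-uniform. -/
def IsUniform (H : DirHypergraph n) (m : ℕ) : Prop :=
  ∀ e ∈ H.edges, (e.1 ∪ e.2).card = m

/-- `H` is non-uniform: it has two edges of different cardinalities. -/
def NonUniform (H : DirHypergraph n) : Prop :=
  ∃ e ∈ H.edges, ∃ e' ∈ H.edges, (e.1 ∪ e.2).card ≠ (e'.1 ∪ e'.2).card

/-- `m = m.c.e.(H)`, the maximum cardinality of an edge (the rank of `H`). -/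
def mce (H : DirHypergraph n) (m : ℕ) : Prop :=
  (∀ e ∈ H.edges, (e.1 ∪ e.2).card ≤ m) ∧ ∃ e ∈ H.edges, (e.1 ∪ e.2).card = m

/-- `c = corank(H)`, the minimum cardinality of an edge. -/
def corank (H : DirHypergraph n) (c : ℕ) : Prop :=
  (∀ e ∈ H.edges, c ≤ (e.1 ∪ e.2).card) ∧ ∃ e ∈ H.edges, (e.1 ∪ e.2).card = c

end DirHypergraph

variable {n : ℕ}

/-- Out-degree of a vertex. -/
def outDeg (H : DirHypergraph n) (v : Fin n) : ℕ :=
  (H.edges.filter (fun e => v ∈ e.1)).card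

/-- In-degree of a vertex. -/
def inDeg (H : DirHypergraph n) (v : Fin n) : ℕ :=
  (H.edges.filter (fun e => v ∈ e.2)).card

/-- Degree of a vertex in the underlying undirected hypergraph. -/
def undDeg (H : DirHypergraph n) (v : Fin n) : ℕ :=
  (H.edges.filter (fun e => v ∈ e.1 ∪ e.2)).card

/-- The maximum out-degree `Δ⁺`. -/
noncomputable def maxOutDeg (H : DirHypergraph n) : ℝ :=
  sSup (Set.range fun v => (outDeg H v : ℝ))

/-- The minimum out-degree `δ⁺`. -/
noncomputable def minOutDeg (H : DirHypergraph n) : ℝ :=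
  sInf (Set.range fun v => (outDeg H v : ℝ))

/-- The out-adjacency hypermatrix of a directed `m`-uniform hypergraph:
the entry at the tuple `f = (i₁, …, i_m)` is `1/((m-k)!(k-1)!)` when, for some
edge `e` with `k = |T_e|`, the first `k` indices are exactly the distinct
elements of `T_e` and the last `m - k` indices are exactly the distinct
elements of `H_e`; all other entries are zero. -/
noncomputable def outAdj (m : ℕ) (H : DirHypergraph n) (f : Fin m → Fin n) : ℝ :=
  ∑ e ∈ H.edges,
    if ((Finset.univ.filter fun j : Fin m => (j : ℕ) < e.1.card).image f = e.1 ∧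
        (Finset.univ.filter fun j : Fin m => e.1.card ≤ (j : ℕ)).image f = e.2)
    then (1 : ℝ) / ((((m - e.1.card).factorial * (e.1.card - 1).factorial : ℕ)) : ℝ)
    else 0

/-- The in-adjacency hypermatrix of a directed `m`-uniform hypergraph. -/
noncomputable def inAdj (m : ℕ) (H : DirHypergraph n) (f : Fin m → Fin n) : ℝ :=
  ∑ e ∈ H.edges,
    if ((Finset.univ.filter fun j : Fin m => (j : ℕ) < m - e.1.card).image f = e.2 ∧
        (Finset.univ.filter fun j : Fin m => m - e.1.card ≤ (j : ℕ)).image f = e.1)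
    then (1 : ℝ) / ((((m - e.1.card - 1).factorial * (e.1.card).factorial : ℕ)) : ℝ)
    else 0

/-- The adjacency hypermatrix of the underlying undirected hypergraph `H_D`. -/
noncomputable def undAdj (m : ℕ) (H : DirHypergraph n) (f : Fin m → Fin n) : ℝ :=
  ∑ e ∈ H.edges,
    if (Function.Injective f ∧ Finset.univ.image f = e.1 ∪ e.2)
    then (1 : ℝ) / (((m - 1).factorial : ℕ) : ℝ)
    else 0

/-- The supersymmetric hypermatrix `B` with `b_{i₁…i_m} = |T_e|/m!` whenever
`i₁, …, i_m` are distinct and `{i₁, …, i_m} = T_e ∪ H_e` for an edge `e`. -/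
noncomputable def symB (m : ℕ) (H : DirHypergraph n) (f : Fin m → Fin n) : ℝ :=
  ∑ e ∈ H.edges,
    if (Function.Injective f ∧ Finset.univ.image f = e.1 ∪ e.2)
    then (e.1.card : ℝ) / (m.factorial : ℝ)
    else 0

/-- The order-`m` diagonal hypermatrix with diagonal entries `d`. -/
noncomputable def diagHM (m : ℕ) (d : Fin n → ℝ) (f : Fin m → Fin n) : ℝ :=
  ∑ i : Fin n, if f = (fun _ => i) then d i else 0

/-- The normalizing constant `α` in the definition of the out-adjacency
hypermatrix of a general (non-uniform) directed hypergraph, for an edge with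
tail of size `k` and `s` vertices in total, inside a rank-`m` hypergraph. -/
def alphaVal (m k s : ℕ) : ℕ :=
  ∑ r ∈ Finset.range (m - s + 1),
    (∑ t ∈ (Finset.Nat.antidiagonalTuple k (r + k)).filter (fun t => ∀ i, 1 ≤ t i),
        Nat.multinomial Finset.univ t) *
    (∑ t ∈ (Finset.Nat.antidiagonalTuple (s - k) (m - k - r)).filter (fun t => ∀ i, 1 ≤ t i),
        Nat.multinomial Finset.univ t)

/-- The out-adjacency hypermatrix of a general directed (non-uniform)
hypergraph of rank `m`:  the entry at `f = (p₁, …, p_m)` is `k/α` when for some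
edge `e` (with `|T_e| = k`, `|T_e ∪ H_e| = s`) and some `t` with
`k ≤ t ≤ m - s + k`, the first `t` indices all lie in `T_e`, covering it, and
the remaining indices all lie in `H_e`, covering it; other entries are zero. -/
noncomputable def outAdjNU (m : ℕ) (H : DirHypergraph n) (f : Fin m → Fin n) : ℝ :=
  ∑ e ∈ H.edges,
    ∑ t ∈ Finset.Icc e.1.card (m - (e.1.card + e.2.card) + e.1.card),
      if ((Finset.univ.filter fun j : Fin m => (j : ℕ) < t).image f = e.1 ∧
          (Finset.univ.filter fun j : Fin m => t ≤ (j : ℕ)).image f = e.2)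
      then (e.1.card : ℝ) / (alphaVal m e.1.card (e.1.card + e.2.card) : ℝ)
      else 0

/-!
`λ_max^Z(A)` for `A = A_H⁺ + A_H⁻` is the maximum of the form `A x^m` on the unit sphere. Every
Z-eigenvalue equals `A x^m` at its eigenvector; conversely a maximiser of `A x^m` on the sphere is
a Z-eigenvector by Lagrange multipliers, because although `A` is not symmetric, the gradient of
`A x^m` is still `m A x^{m-1}`: counting the tuples that enumerate an edge shows that
`A x^m = m ∑_e ∏_{v ∈ e} x_v` and `(A x^{m-1})_i = ∑_{e ∋ i} ∏_{v ∈ e, v ≠ i} x_v`.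
Since `A_H = ∑ A_{H_i}` entrywise, the form of `A_H` is the sum of the forms of the `A_{H_i}`, and
the maximum of a sum is at most the sum of the maxima.
-/

section Counting

variable {ι κ α : Type*}

theorem injective_of_card_image_univ_eq [Fintype ι] [DecidableEq α] {f : ι → α}
    (hf : #(univ.image f) = Fintype.card ι) : Function.Injective f := by
  rwa [← Set.injOn_univ, ← coe_univ, ← card_image_iff]

theorem univ_image_restrict_eq_image [Fintype ι] [DecidableEq α] (B : Finset ι) (f : ι → α) :
    (univ.image fun j : {j // j ∈ B} => f j) = B.image f := by
  ext; simp

theorem univ_image_restrict_eq_image_compl [Fintype ι] [DecidableEq ι] [DecidableEq α]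
    (B : Finset ι) (f : ι → α) :
    (univ.image fun j : {j // j ∉ B} => f j) = Bᶜ.image f := by
  ext; simp

theorem image_univ_eq_union [Fintype ι] [DecidableEq ι] [DecidableEq α] {B : Finset ι}
    {S T : Finset α} {f : ι → α} (hfS : B.image f = S) (hfT : Bᶜ.image f = T) :
    univ.image f = S ∪ T := by
  rw [← hfS, ← hfT, ← image_union, union_compl]

theorem card_filter_image_univ_eq [Fintype κ] [DecidableEq κ] [Fintype α] [DecidableEq α]
    {S : Finset α} (hS : Fintype.card κ = #S) :
    #{g : κ → α | univ.image g = S} = (#S).factorial := by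
  have hval : Function.Injective fun (e : κ ≃ S) (k : κ) => (e k : α) :=
    fun e e' h => Equiv.ext fun k => Subtype.ext (congrFun h k)
  have hfilter : ({g : κ → α | univ.image g = S} : Finset _) = univ.map ⟨_, hval⟩ := by
    ext g
    simp only [mem_filter, mem_univ, true_and, mem_map, Function.Embedding.coeFn_mk]
    constructor
    · intro hg
      have hinj := injective_of_card_image_univ_eq (by rw [hg, hS])
      have hmem : ∀ k, g k ∈ S := fun k => hg ▸ mem_image_of_mem g (mem_univ k)
      have hbij : Function.Bijective fun k => (⟨g k, hmem k⟩ : S) := by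
        rw [Fintype.bijective_iff_injective_and_card]
        exact ⟨fun a b h => hinj (congrArg Subtype.val h), by simp [hS]⟩
      exact ⟨Equiv.ofBijective _ hbij, rfl⟩
    · rintro ⟨e, rfl⟩
      ext v
      simp only [mem_image, mem_univ, true_and]
      exact ⟨fun ⟨k, hk⟩ => hk ▸ (e k).2, fun hv => ⟨e.symm ⟨v, hv⟩, by simp⟩⟩
  rw [hfilter, card_map, card_univ,
    Fintype.card_equiv (Fintype.equivOfCardEq (by simpa using hS)), hS]

theorem card_filter_restrict_and_restrict [Fintype ι] [DecidableEq ι] [Fintype α]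
    (B : Finset ι) (P : ({j // j ∈ B} → α) → Prop) (Q : ({j // j ∉ B} → α) → Prop)
    [DecidablePred P] [DecidablePred Q] :
    #{f : ι → α | P (fun j => f j) ∧ Q (fun j => f j)} = #{g | P g} * #{h | Q h} := by
  rw [← card_product]
  exact card_equiv (Equiv.piEquivPiSubtypeProd (· ∈ B) _) (by simp [Equiv.piEquivPiSubtypeProd])

theorem card_filter_image_eq_image_compl_eq [Fintype ι] [DecidableEq ι] [Fintype α]
    [DecidableEq α] (B : Finset ι) {S T : Finset α} (hS : #B = #S) (hT : #Bᶜ = #T) :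
    #{f : ι → α | B.image f = S ∧ Bᶜ.image f = T} = (#S).factorial * (#T).factorial := by
  have key := card_filter_restrict_and_restrict B (univ.image · = S) (univ.image · = T)
  simp only [univ_image_restrict_eq_image, univ_image_restrict_eq_image_compl] at key
  rw [key, card_filter_image_univ_eq (by simpa using hS),
    card_filter_image_univ_eq (by simpa [card_compl] using hT)]

theorem card_filter_image_univ_eq_and_apply_eq [Fintype κ] [DecidableEq κ] [Fintype α]
    [DecidableEq α] {S : Finset α} (hS : Fintype.card κ = #S) (k₀ : κ) {i : α}
    (hi : i ∈ S) :
    #{g : κ → α | univ.image g = S ∧ g k₀ = i} = (#S - 1).factorial := by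
  have hpin : ∀ g : κ → α, (univ.image g = S ∧ g k₀ = i) ↔
      ({k₀} : Finset κ).image g = {i} ∧ ({k₀}ᶜ : Finset κ).image g = S.erase i := by
    intro g
    rw [image_singleton, singleton_inj, and_comm]
    refine and_congr_right fun hk₀ => ⟨fun hg => ?_, fun hg => ?_⟩
    · have hinj := injective_of_card_image_univ_eq (by rw [hg, hS])
      rw [compl_singleton, image_erase hinj, hg, hk₀]
    · rw [← insert_erase hi, ← hg, ← hk₀, ← image_insert, compl_singleton,
        insert_erase (mem_univ _)]
  rw [filter_congr fun g _ => hpin g, card_filter_image_eq_image_compl_eq _ (by simp)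
    (by rw [card_compl, card_singleton, card_erase_of_mem hi, hS]), card_singleton,
    Nat.factorial_one, one_mul, card_erase_of_mem hi]

theorem card_filter_apply_eq_and_image_eq_image_compl_eq [Fintype ι] [DecidableEq ι]
    [Fintype α] [DecidableEq α] (B : Finset ι) {S T : Finset α} (hS : #B = #S)
    (hT : #Bᶜ = #T) {j₀ : ι} (hj₀ : j₀ ∈ B) (i : α) :
    #{f : ι → α | f j₀ = i ∧ B.image f = S ∧ Bᶜ.image f = T} =
      if i ∈ S then (#S - 1).factorial * (#T).factorial else 0 := by
  split_ifs with hi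
  · have key := card_filter_restrict_and_restrict B
      (fun g => univ.image g = S ∧ g ⟨j₀, hj₀⟩ = i) (univ.image · = T)
    simp only [univ_image_restrict_eq_image, univ_image_restrict_eq_image_compl, and_assoc,
      and_left_comm (b := _ = i)] at key
    rw [key, card_filter_image_univ_eq_and_apply_eq (by simpa using hS) _ hi,
      card_filter_image_univ_eq (by simpa [card_compl] using hT)]
  · refine card_eq_zero.2 (filter_eq_empty_iff.2 fun f _ ⟨hf, hfS, _⟩ => hi ?_)
    exact hf ▸ hfS ▸ mem_image_of_mem f hj₀

theorem prod_comp_eq_prod_of_image_univ_eq {M : Type*} [Fintype ι] [DecidableEq α]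
    [CommMonoid M] {f : ι → α} {U : Finset α} (hf : univ.image f = U)
    (hU : #U = Fintype.card ι) (x : α → M) : ∏ j, x (f j) = ∏ v ∈ U, x v := by
  rw [← hf, prod_image (injective_of_card_image_univ_eq (hf ▸ hU)).injOn]

theorem prod_erase_comp_eq_prod_erase_of_image_univ_eq {M : Type*} [Fintype ι]
    [DecidableEq ι] [DecidableEq α] [CommMonoid M] {f : ι → α} {U : Finset α}
    (hf : univ.image f = U) (hU : #U = Fintype.card ι) (x : α → M) (j₀ : ι) :
    ∏ j ∈ univ.erase j₀, x (f j) = ∏ v ∈ U.erase (f j₀), x v := by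
  have hinj := injective_of_card_image_univ_eq (hf ▸ hU)
  rw [← hf, ← image_erase hinj, prod_image hinj.injOn]

end Counting

section ZEigenvalues

variable {m : ℕ}

/-- `Fin n → ℝ` carries the sup norm, so the Euclidean unit sphere is given by its equation. -/
def unitSphere (n : ℕ) : Set (Fin n → ℝ) := {x | ∑ i, x i ^ 2 = 1}

theorem isCompact_unitSphere (n : ℕ) : IsCompact (unitSphere n) := by
  convert (isCompact_sphere (0 : EuclideanSpace ℝ (Fin n)) 1).image
    (EuclideanSpace.equiv (Fin n) ℝ).continuous using 1
  ext x
  simp only [unitSphere, Set.mem_ofPred_eq, Set.mem_image, mem_sphere_zero_iff_norm,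
    EuclideanSpace.norm_eq]
  constructor
  · intro hx; exact ⟨WithLp.toLp 2 x, by simp [hx], rfl⟩
  · rintro ⟨y, hy, rfl⟩; simpa using hy

theorem fderiv_sum_sq_apply_single (x : Fin n → ℝ) (i : Fin n) :
    fderiv ℝ (fun y : Fin n → ℝ => ∑ j, y j ^ 2) x (Pi.single i 1) = 2 * x i := by
  have h : HasFDerivAt (fun y : Fin n → ℝ => ∑ j, y j ^ 2)
      (∑ j, (2 * x j) • ContinuousLinearMap.proj (R := ℝ) (φ := fun _ : Fin n => ℝ) j) x :=
    HasFDerivAt.fun_sum fun j _ =>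
      ((hasFDerivAt_apply (𝕜 := ℝ) j x).pow 2).congr_fderiv (by simp)
  rw [h.fderiv]
  simp [Pi.single_apply]

theorem contDiff_formEval (A : (Fin m → Fin n) → ℝ) {k : WithTop ℕ∞} :
    ContDiff ℝ k (formEval A) := by
  unfold formEval; fun_prop

theorem formEval_eq_sum_mul_hmApply (hm : 0 < m) (A : (Fin m → Fin n) → ℝ)
    (x : Fin n → ℝ) : formEval A x = ∑ i, x i * hmApply hm A x i := by
  rw [formEval, ← sum_fiberwise univ fun f : Fin m → Fin n => f ⟨0, hm⟩]
  refine sum_congr rfl fun i _ => ?_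
  rw [hmApply, mul_sum]
  refine sum_congr rfl fun f hf => ?_
  rw [filter_ne', ← (mem_filter.1 hf).2, ← mul_prod_erase univ _ (mem_univ _)]
  ring

theorem IsZEigenpair.eq_formEval {hm : 0 < m} {A : (Fin m → Fin n) → ℝ} {lam : ℝ}
    {x : Fin n → ℝ} (h : IsZEigenpair hm A lam x) : lam = formEval A x := by
  rw [formEval_eq_sum_mul_hmApply hm, ← mul_one lam, ← h.2, mul_sum]
  exact sum_congr rfl fun i _ => by rw [h.1 i]; ring

theorem exists_isZEigenpair_isMaxOn (hm : 0 < m) (A : (Fin m → Fin n) → ℝ)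
    (hgrad : ∀ x i, fderiv ℝ (formEval A) x (Pi.single i 1) = m * hmApply hm A x i)
    (hn : 0 < n) :
    ∃ lam x, IsZEigenpair hm A lam x ∧ IsMaxOn (formEval A) (unitSphere n) x := by
  have hne : (unitSphere n).Nonempty :=
    ⟨Pi.single ⟨0, hn⟩ 1, by simp [unitSphere, Pi.single_apply]⟩
  obtain ⟨x, hx, hmax⟩ := (isCompact_unitSphere n).exists_isMaxOn hne
    (contDiff_formEval A (k := 1)).continuous.continuousOn
  have hx' : ∑ i, x i ^ 2 = 1 := hx
  have hextr : IsLocalExtrOn (formEval A) {y | ∑ i, y i ^ 2 = ∑ i, x i ^ 2} x := by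
    rw [hx']; exact hmax.localize.isExtr
  have hsq : ContDiff ℝ 1 fun y : Fin n → ℝ => ∑ i, y i ^ 2 := by fun_prop
  -- Lagrange: `a ∇(∑ x_i²) + b ∇(A x^m) = 0` at `x`; pairing with `x` gives
  -- `2a + b m A x^m = 0`, so `b ≠ 0` and the multiplier is `A x^m`.
  obtain ⟨a, b, hab, hab0⟩ := hextr.exists_multipliers_of_hasStrictFDerivAt_1d
    (hsq.contDiffAt.hasStrictFDerivAt one_ne_zero)
    ((contDiff_formEval A (k := 1)).contDiffAt.hasStrictFDerivAt one_ne_zero)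
  have hcoord : ∀ i, a * (2 * x i) + b * (m * hmApply hm A x i) = 0 := fun i => by
    simpa [fderiv_sum_sq_apply_single, hgrad] using congrArg (· (Pi.single i 1)) hab0
  have heuler : a * 2 + b * (m * formEval A x) = 0 := by
    rw [← mul_one (a * 2), ← hx', formEval_eq_sum_mul_hmApply hm, mul_sum, mul_sum, mul_sum,
      ← sum_add_distrib]
    exact sum_eq_zero fun i _ => by linear_combination x i * hcoord i
  have hb : b ≠ 0 := by
    rintro rfl
    exact hab (Prod.ext (by simp only [Prod.fst_zero]; linarith) rfl)
  refine ⟨formEval A x, x, ⟨fun i => ?_, hx'⟩, hmax⟩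
  have hbm : b * m ≠ 0 := mul_ne_zero hb (Nat.cast_ne_zero.2 hm.ne')
  exact mul_left_cancel₀ hbm (by linear_combination hcoord i - x i * heuler)

theorem formEval_le_zMax (hm : 0 < m) {A : (Fin m → Fin n) → ℝ}
    (hgrad : ∀ x i, fderiv ℝ (formEval A) x (Pi.single i 1) = m * hmApply hm A x i)
    {y : Fin n → ℝ} (hy : y ∈ unitSphere n) : formEval A y ≤ zMax hm A := by
  have hn : 0 < n := Nat.pos_of_ne_zero fun h => by subst h; simp [unitSphere] at hy
  obtain ⟨lam, x, hx, hmax⟩ := exists_isZEigenpair_isMaxOn hm A hgrad hn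
  have hbdd : BddAbove {lam | ∃ x, IsZEigenpair hm A lam x} := ⟨lam, by
    rintro _ ⟨x', hx'⟩
    rw [hx'.eq_formEval, hx.eq_formEval]
    exact hmax hx'.2⟩
  calc formEval A y ≤ formEval A x := hmax hy
    _ = lam := hx.eq_formEval.symm
    _ ≤ zMax hm A := le_csSup hbdd ⟨x, hx⟩

end ZEigenvalues

section Hypermatrices

variable {m : ℕ}

theorem formEval_add (A B : (Fin m → Fin n) → ℝ) (x : Fin n → ℝ) :
    formEval (fun f => A f + B f) x = formEval A x + formEval B x := by
  simp only [formEval, add_mul, sum_add_distrib]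

theorem formEval_const_mul (c : ℝ) (A : (Fin m → Fin n) → ℝ) (x : Fin n → ℝ) :
    formEval (fun f => c * A f) x = c * formEval A x := by
  simp only [formEval, mul_assoc, mul_sum]

theorem formEval_sum {ι : Type*} (s : Finset ι) (A : ι → (Fin m → Fin n) → ℝ)
    (x : Fin n → ℝ) :
    formEval (fun f => ∑ e ∈ s, A e f) x = ∑ e ∈ s, formEval (A e) x := by
  simp only [formEval, sum_mul]
  exact sum_comm

theorem hmApply_add (hm : 0 < m) (A B : (Fin m → Fin n) → ℝ) (x : Fin n → ℝ) (i : Fin n) :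
    hmApply hm (fun f => A f + B f) x i = hmApply hm A x i + hmApply hm B x i := by
  simp only [hmApply, add_mul, sum_add_distrib]

theorem hmApply_const_mul (hm : 0 < m) (c : ℝ) (A : (Fin m → Fin n) → ℝ) (x : Fin n → ℝ)
    (i : Fin n) : hmApply hm (fun f => c * A f) x i = c * hmApply hm A x i := by
  simp only [hmApply, mul_assoc, mul_sum]

theorem hmApply_sum (hm : 0 < m) {ι : Type*} (s : Finset ι) (A : ι → (Fin m → Fin n) → ℝ)
    (x : Fin n → ℝ) (i : Fin n) :
    hmApply hm (fun f => ∑ e ∈ s, A e f) x i = ∑ e ∈ s, hmApply hm (A e) x i := by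
  simp only [hmApply, sum_mul]
  exact sum_comm

noncomputable def blockIndicator (k : ℕ) (S T : Finset (Fin n)) (f : Fin m → Fin n) : ℝ :=
  if (univ.filter fun j : Fin m => (j : ℕ) < k).image f = S ∧
      (univ.filter fun j : Fin m => k ≤ (j : ℕ)).image f = T then 1 else 0

theorem filter_le_eq_compl_filter_lt (m k : ℕ) :
    (univ.filter fun j : Fin m => k ≤ (j : ℕ)) =
      (univ.filter fun j : Fin m => (j : ℕ) < k)ᶜ := by
  ext; simp

theorem card_filter_lt_and_card_compl {k : ℕ} {S T : Finset (Fin n)} (hk : #S = k)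
    (hm : #S + #T = m) :
    #(univ.filter fun j : Fin m => (j : ℕ) < k) = #S ∧
      #(univ.filter fun j : Fin m => (j : ℕ) < k)ᶜ = #T := by
  rw [card_compl, Fin.card_filter_val_lt, Fintype.card_fin]; omega

theorem formEval_blockIndicator {k : ℕ} {S T : Finset (Fin n)} (hk : #S = k)
    (hST : Disjoint S T) (hm : #S + #T = m) (x : Fin n → ℝ) :
    formEval (blockIndicator (m := m) k S T) x =
      (#S).factorial * (#T).factorial * ∏ v ∈ S ∪ T, x v := by
  obtain ⟨hB, hBc⟩ := card_filter_lt_and_card_compl hk hm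
  have hU : #(S ∪ T) = Fintype.card (Fin m) := by
    rw [card_union_of_disjoint hST, Fintype.card_fin, hm]
  simp only [formEval, blockIndicator, filter_le_eq_compl_filter_lt, ite_mul, one_mul, zero_mul]
  rw [← sum_filter, sum_congr rfl fun f hf => prod_comp_eq_prod_of_image_univ_eq
    (image_univ_eq_union (mem_filter.1 hf).2.1 (mem_filter.1 hf).2.2) hU x, sum_const,
    card_filter_image_eq_image_compl_eq _ hB hBc, nsmul_eq_mul]
  push_cast; ring

theorem hmApply_blockIndicator (hm : 0 < m) {k : ℕ} {S T : Finset (Fin n)} (hk : #S = k)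
    (hk0 : 0 < k) (hST : Disjoint S T) (hmST : #S + #T = m) (x : Fin n → ℝ) (i : Fin n) :
    hmApply hm (blockIndicator (m := m) k S T) x i =
      if i ∈ S then (#S - 1).factorial * (#T).factorial * ∏ v ∈ (S ∪ T).erase i, x v
      else 0 := by
  obtain ⟨hB, hBc⟩ := card_filter_lt_and_card_compl hk hmST
  have hU : #(S ∪ T) = Fintype.card (Fin m) := by
    rw [card_union_of_disjoint hST, Fintype.card_fin, hmST]
  simp only [hmApply, blockIndicator, filter_le_eq_compl_filter_lt, ite_mul, one_mul, zero_mul,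
    filter_ne']
  rw [← sum_filter, filter_filter,
    sum_congr rfl fun f hf => show _ = ∏ v ∈ (S ∪ T).erase i, x v by
      obtain ⟨-, hf0, hfS, hfT⟩ := mem_filter.1 hf
      rw [prod_erase_comp_eq_prod_erase_of_image_univ_eq (image_univ_eq_union hfS hfT) hU x, hf0],
    sum_const, card_filter_apply_eq_and_image_eq_image_compl_eq _ hB hBc (by simpa) i]
  split_ifs <;> simp

noncomputable def edgeAdj (m : ℕ) (e : Finset (Fin n) × Finset (Fin n)) (f : Fin m → Fin n) :
    ℝ :=
  (1 : ℝ) / ((((m - e.1.card).factorial * (e.1.card - 1).factorial : ℕ)) : ℝ) *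
      blockIndicator e.1.card e.1 e.2 f +
    (1 : ℝ) / ((((m - e.1.card - 1).factorial * (e.1.card).factorial : ℕ)) : ℝ) *
      blockIndicator (m - e.1.card) e.2 e.1 f

theorem outAdj_add_inAdj_eq_sum_edgeAdj (m : ℕ) (G : DirHypergraph n) (f : Fin m → Fin n) :
    outAdj m G f + inAdj m G f = ∑ e ∈ G.edges, edgeAdj m e f := by
  simp only [outAdj, inAdj, edgeAdj, blockIndicator, mul_ite, mul_one, mul_zero, sum_add_distrib]

theorem formEval_edgeAdj {S T : Finset (Fin n)} (hS : S.Nonempty) (hT : T.Nonempty)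
    (hST : Disjoint S T) (hm : #S + #T = m) (x : Fin n → ℝ) :
    formEval (edgeAdj m (S, T)) x = m * ∏ v ∈ S ∪ T, x v := by
  unfold edgeAdj
  dsimp only
  rw [formEval_add, formEval_const_mul, formEval_const_mul, formEval_blockIndicator rfl hST hm,
    formEval_blockIndicator (by omega) hST.symm (by omega), union_comm T S]
  obtain ⟨s, hs⟩ : ∃ s, #S = s + 1 := Nat.exists_eq_succ_of_ne_zero hS.card_pos.ne'
  obtain ⟨t, ht⟩ : ∃ t, #T = t + 1 := Nat.exists_eq_succ_of_ne_zero hT.card_pos.ne'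
  subst hm
  simp only [hs, ht, Nat.add_sub_cancel, Nat.add_sub_cancel_left, Nat.factorial_succ]
  push_cast
  field_simp

theorem hmApply_edgeAdj (hm : 0 < m) {S T : Finset (Fin n)} (hS : S.Nonempty)
    (hT : T.Nonempty) (hST : Disjoint S T) (hmST : #S + #T = m) (x : Fin n → ℝ) (i : Fin n) :
    hmApply hm (edgeAdj m (S, T)) x i =
      if i ∈ S ∪ T then ∏ v ∈ (S ∪ T).erase i, x v else 0 := by
  unfold edgeAdj
  dsimp only
  rw [hmApply_add, hmApply_const_mul, hmApply_const_mul,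
    hmApply_blockIndicator hm rfl hS.card_pos hST hmST,
    hmApply_blockIndicator hm (by omega) (by have := hT.card_pos; omega) hST.symm (by omega),
    union_comm T S, show m - #S = #T by omega]
  by_cases hiS : i ∈ S
  · simp [hiS, disjoint_left.1 hST hiS]
    field_simp
  · by_cases hiT : i ∈ T <;> simp [hiS, hiT]
    field_simp

end Hypermatrices

section Hypergraphs

variable {m : ℕ}

theorem DirHypergraph.card_tail_add_card_head {G : DirHypergraph n} (hG : G.IsUniform m)
    {e : Finset (Fin n) × Finset (Fin n)} (he : e ∈ G.edges) : #e.1 + #e.2 = m := by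
  rw [← card_union_of_disjoint (G.tail_head_disjoint e he), hG e he]

theorem formEval_adj {G : DirHypergraph n} (hG : G.IsUniform m) (x : Fin n → ℝ) :
    formEval (fun f => outAdj m G f + inAdj m G f) x =
      m * ∑ e ∈ G.edges, ∏ v ∈ e.1 ∪ e.2, x v := by
  simp only [outAdj_add_inAdj_eq_sum_edgeAdj, formEval_sum, mul_sum]
  exact sum_congr rfl fun e he => formEval_edgeAdj (G.tail_nonempty e he) (G.head_nonempty e he)
    (G.tail_head_disjoint e he) (G.card_tail_add_card_head hG he) x

theorem hmApply_adj (hm : 0 < m) {G : DirHypergraph n} (hG : G.IsUniform m)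
    (x : Fin n → ℝ) (i : Fin n) :
    hmApply hm (fun f => outAdj m G f + inAdj m G f) x i =
      ∑ e ∈ G.edges, if i ∈ e.1 ∪ e.2 then ∏ v ∈ (e.1 ∪ e.2).erase i, x v else 0 := by
  simp only [outAdj_add_inAdj_eq_sum_edgeAdj, hmApply_sum]
  exact sum_congr rfl fun e he => hmApply_edgeAdj hm (G.tail_nonempty e he)
    (G.head_nonempty e he) (G.tail_head_disjoint e he) (G.card_tail_add_card_head hG he) x i

theorem fderiv_prod_apply_single {ι : Type*} [Fintype ι] [DecidableEq ι] (s : Finset ι)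
    (x : ι → ℝ) (i : ι) :
    fderiv ℝ (fun y : ι → ℝ => ∏ v ∈ s, y v) x (Pi.single i 1) =
      if i ∈ s then ∏ v ∈ s.erase i, x v else 0 := by
  rw [hasFDerivAt_finsetProd.fderiv]
  simp [Pi.single_apply]

theorem fderiv_formEval_adj_apply_single (hm : 0 < m) {G : DirHypergraph n}
    (hG : G.IsUniform m) (x : Fin n → ℝ) (i : Fin n) :
    fderiv ℝ (formEval fun f => outAdj m G f + inAdj m G f) x (Pi.single i 1) =
      m * hmApply hm (fun f => outAdj m G f + inAdj m G f) x i := by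
  rw [funext (formEval_adj hG), hmApply_adj hm hG, fderiv_const_mul (by fun_prop),
    fderiv_fun_sum (by fun_prop)]
  simp [fderiv_prod_apply_single]

theorem adj_eq_sum_adj_of_partition {p : ℕ} {H : DirHypergraph n}
    {Hs : Fin p → DirHypergraph n}
    (hdis : ∀ i j, i ≠ j → Disjoint (Hs i).edges (Hs j).edges)
    (hcov : ∀ e, e ∈ H.edges ↔ ∃ i, e ∈ (Hs i).edges) (f : Fin m → Fin n) :
    outAdj m H f + inAdj m H f = ∑ i, (outAdj m (Hs i) f + inAdj m (Hs i) f) := by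
  have hedges : H.edges = univ.biUnion fun i => (Hs i).edges := by ext e; simp [hcov]
  simp only [outAdj_add_inAdj_eq_sum_edgeAdj, hedges]
  exact sum_biUnion fun i _ j _ hij => hdis i j hij

end Hypergraphs

theorem zMax_le_sum_zMax_of_partition_general {m n p : ℕ} (hm : 0 < m)
    (H : DirHypergraph n) (hH : H.IsUniform m)
    (Hs : Fin p → DirHypergraph n)
    (hsub : ∀ i, (Hs i).edges ⊆ H.edges)
    (hdis : ∀ i j, i ≠ j → Disjoint (Hs i).edges (Hs j).edges)
    (hcov : ∀ e, e ∈ H.edges ↔ ∃ i, e ∈ (Hs i).edges) :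
    zMax hm (fun f => outAdj m H f + inAdj m H f) ≤
      ∑ i, zMax hm (fun f => outAdj m (Hs i) f + inAdj m (Hs i) f) := by
  rcases Nat.eq_zero_or_pos n with rfl | hn
  · simp [zMax, IsZEigenpair]
  obtain ⟨lam, x, hx, -⟩ :=
    exists_isZEigenpair_isMaxOn hm _ (fderiv_formEval_adj_apply_single hm hH) hn
  refine csSup_le ⟨lam, x, hx⟩ ?_
  rintro lam ⟨x, hx⟩
  rw [hx.eq_formEval, funext (adj_eq_sum_adj_of_partition hdis hcov), formEval_sum]
  exact sum_le_sum fun i _ => formEval_le_zMax hm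
    (fderiv_formEval_adj_apply_single hm fun e he => hH e (hsub i he)) hx.2

/-- If the edge set of a directed `m`-uniform hypergraph
`H` (`m` even) is partitioned among directed spanning subhypergraphs
`H₁, …, H_p`, then `λ_max^Z(A_H) ≤ Σᵢ λ_max^Z(A_{Hᵢ})`, where
`A_G = A_G⁺ + A_G⁻`. -/
theorem zMax_le_sum_zMax_of_partition {m n p : ℕ} (hm : 0 < m) (heven : Even m)
    (H : DirHypergraph n) (hH : H.IsUniform m)
    (Hs : Fin p → DirHypergraph n)
    (hsub : ∀ i, (Hs i).edges ⊆ H.edges)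
    (hdis : ∀ i j, i ≠ j → Disjoint (Hs i).edges (Hs j).edges)
    (hcov : ∀ e, e ∈ H.edges ↔ ∃ i, e ∈ (Hs i).edges) :
    zMax hm (fun f => outAdj m H f + inAdj m H f) ≤
      ∑ i, zMax hm (fun f => outAdj m (Hs i) f + inAdj m (Hs i) f) :=
  zMax_le_sum_zMax_of_partition_general hm H hH Hs hsub hdis hcov
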